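/- arXiv:1802.02483 — 7 statements merged into one kernel-verified Lean document; each statement's English description precedes it below -/
import Mathlib

section
/- Fix (x̄, ū) satisfying the steady-state relation (J−R)∇H(x̄) + G(x̄)ū = 0. Then the vector field f(x) = (J−R)∇H(x) + G(x)u can be rewritten as f(x) = (J − (R + Z(x)))∇S(x) + G(x)(u − ū), where Z(x) := G(x̄)·diag(ū)·G(x), S is the shifted Hamiltonian, and G(x) = diag(g_1(x),...,g_n(x)) with g_i(x) = 1/(∇H(x))_i for i outside the index set I of zero inputs and g_i = 0 for i in I (assuming (∇H(x))_i > 0 for i ∉ I and u_i = ū_i = 0 for i ∈ I). -/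
open Matrix

/-- Shifted model of a power-controlled Hamiltonian system.  With `J` skew-symmetric,
`R ⪰ 0`, input matrix `G(x) = diag(gᵢ(x))`, `gᵢ(x) = 1/(∇H(x))ᵢ` for `i ∉ I` and `gᵢ = 0`
for `i ∈ I` (the zero-input indices), steady state `(J−R)∇H(x̄) + G(x̄)ū = 0`, and
`Z(x) = G(x̄) diag(ū) G(x)`, the vector field `(J−R)∇H(x) + G(x)u` equals
`(J − (R + Z(x)))∇S(x) + G(x)(u − ū)` on `Ω⁺`, where `∇S(x) = ∇H(x) − ∇H(x̄)`. -/
theorem shifted_model (n : ℕ)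
    (J R : Matrix (Fin n) (Fin n) ℝ) (hJ : Jᵀ = -J) (hR : R.PosSemidef)
    (gradH : (Fin n → ℝ) → (Fin n → ℝ))
    (I : Set (Fin n)) [DecidablePred (· ∈ I)]
    (u ubar : Fin n → ℝ) (hu : ∀ i ∈ I, u i = 0 ∧ ubar i = 0)
    (xbar : Fin n → ℝ) (hxbar : ∀ i ∉ I, 0 < gradH xbar i)
    (G : (Fin n → ℝ) → Matrix (Fin n) (Fin n) ℝ)
    (hG : ∀ x, G x = Matrix.diagonal (fun i => if i ∈ I then 0 else (gradH x i)⁻¹))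
    (hss : (J - R) *ᵥ gradH xbar + G xbar *ᵥ ubar = 0)
    (Z : (Fin n → ℝ) → Matrix (Fin n) (Fin n) ℝ)
    (hZ : ∀ x, Z x = G xbar * Matrix.diagonal ubar * G x) :
    ∀ x : Fin n → ℝ, (∀ i ∉ I, 0 < gradH x i) →
      (J - R) *ᵥ gradH x + G x *ᵥ u
        = (J - (R + Z x)) *ᵥ (gradH x - gradH xbar) + G x *ᵥ (u - ubar) := by
  intro x hx
  have hA : Z x *ᵥ gradH x = G xbar *ᵥ ubar := by
    funext i
    simp only [hZ, hG, ← mulVec_mulVec, mulVec_diagonal]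
    by_cases hi : i ∈ I
    · simp [hi]
    · have h1 : gradH x i ≠ 0 := (hx i hi).ne'
      simp only [hi, if_false]
      field_simp
  have hB : Z x *ᵥ gradH xbar = G x *ᵥ ubar := by
    funext i
    simp only [hZ, hG, ← mulVec_mulVec, mulVec_diagonal]
    by_cases hi : i ∈ I
    · simp [hi]
    · have h1 : gradH x i ≠ 0 := (hx i hi).ne'
      have h2 : gradH xbar i ≠ 0 := (hxbar i hi).ne'
      simp only [hi, if_false]
      field_simp
  have hss' : (J - R) *ᵥ gradH xbar = -(G xbar *ᵥ ubar) := by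
    rw [eq_neg_iff_add_eq_zero]; exact hss
  have hsplit : J - (R + Z x) = (J - R) - Z x := by rw [sub_add_eq_sub_sub]
  rw [hsplit]
  simp only [Matrix.sub_mulVec, Matrix.mulVec_sub, hA, hB, hss']
  abel
end

section
/- Along trajectories of ẋ = (J−R)∇H(x) + G(x)u with the shifted model ẋ = (J − (R+Z(x)))∇S(x) + G(x)(u−ū) and output y = G(x)ᵀ∇S(x), the derivative of the shifted Hamiltonian satisfies dS/dt = −∇S(x)ᵀ(R+Z(x))∇S(x) + yᵀ(u−ū); hence if R + Z(x) is positive semidefinite, dS/dt ≤ (y − ȳ)ᵀ(u − ū), where ȳ = 0 is the output at x̄. -/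
/-!
The equilibrium relation `(J - R)∇H(x̄) = -G(x̄)ū`, together with
`G(x̄)ū - G(x)ū = Z(x)(∇H(x) - ∇H(x̄))` (on each coordinate a difference of reciprocals),
puts the dynamics in the shifted form `ẋ = (J - (R + Z(x)))∇S(x) + G(x)(u - ū)`, where
`∇S(x) = ∇H(x) - ∇H(x̄)`. By the chain rule `dS/dt = ∇S(x)ᵀẋ`; the skew-symmetric `J` drops
out of the quadratic form and the input term is `yᵀ(u - ū)`.
-/

open Matrix

section ShiftedModel

variable {ι α : Type*} [Fintype ι] [CommRing α]

theorem Matrix.dotProduct_mulVec_self_eq_zero_of_transpose_eq_neg [NoZeroDivisors α] [CharZero α]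
    {J : Matrix ι ι α} (hJ : Jᵀ = -J) (s : ι → α) : s ⬝ᵥ (J *ᵥ s) = 0 :=
  CharZero.eq_neg_self_iff.mp <| by
    conv_lhs => rw [dotProduct_mulVec, ← mulVec_transpose, hJ, dotProduct_comm, neg_mulVec,
      dotProduct_neg]

theorem Matrix.diagonal_mulVec_sub_diagonal_mulVec [DecidableEq ι] {a b g g' : ι → α}
    (h : ∀ i, a i - b i = a i * b i * (g i - g' i)) (v : ι → α) :
    diagonal a *ᵥ v - diagonal b *ᵥ v = (diagonal a * diagonal v * diagonal b) *ᵥ (g - g') := by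
  ext i
  simp only [Pi.sub_apply, mulVec_diagonal, diagonal_mul_diagonal]
  linear_combination v i * h i

theorem shifted_model_s5 {J R Z G G' : Matrix ι ι α} {g g' u u' : ι → α}
    (hss : (J - R) *ᵥ g' + G' *ᵥ u' = 0) (hZ : G' *ᵥ u' - G *ᵥ u' = Z *ᵥ (g - g')) :
    (J - R) *ᵥ g + G *ᵥ u = (J - (R + Z)) *ᵥ (g - g') + G *ᵥ (u - u') := by
  rw [← sub_sub, sub_mulVec _ Z, ← hZ, mulVec_sub (J - R), mulVec_sub G,
    eq_neg_of_add_eq_zero_left hss]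
  abel

theorem dotProduct_shifted_model [NoZeroDivisors α] [CharZero α] {J R Z G : Matrix ι ι α}
    (hJ : Jᵀ = -J) (s v : ι → α) :
    s ⬝ᵥ ((J - (R + Z)) *ᵥ s + G *ᵥ v) = -(s ⬝ᵥ ((R + Z) *ᵥ s)) + (Gᵀ *ᵥ s) ⬝ᵥ v := by
  rw [sub_mulVec, dotProduct_add, dotProduct_sub,
    dotProduct_mulVec_self_eq_zero_of_transpose_eq_neg hJ, dotProduct_mulVec s G,
    ← mulVec_transpose, zero_sub]

end ShiftedModel

theorem ite_inv_sub_ite_inv {K : Type*} [Field K] {p : Prop} [Decidable p] {x y : K}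
    (h : ¬p → x ≠ 0 ∧ y ≠ 0) :
    ((if p then 0 else y⁻¹) - if p then 0 else x⁻¹) =
      (if p then 0 else y⁻¹) * (if p then 0 else x⁻¹) * (x - y) := by
  split_ifs with hp
  · simp
  · rw [inv_sub_inv' (h hp).2 (h hp).1]
    ring

section ShiftedHamiltonian

open scoped Gradient RealInnerProductSpace

variable {E : Type*} [NormedAddCommGroup E] [InnerProductSpace ℝ E] [CompleteSpace E]

noncomputable def shiftedHamiltonian (H : E → ℝ) (xbar x : E) : ℝ :=
  H x - ⟪x - xbar, ∇ H xbar⟫ - H xbar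

theorem hasDerivAt_shiftedHamiltonian_comp {H : E → ℝ} {γ : ℝ → E} {v : E} {t : ℝ} (xbar : E)
    (hH : DifferentiableAt ℝ H (γ t)) (hγ : HasDerivAt γ v t) :
    HasDerivAt (fun τ => shiftedHamiltonian H xbar (γ τ)) ⟪∇ H (γ t) - ∇ H xbar, v⟫ t := by
  have hHγ : HasDerivAt (fun τ => H (γ τ)) ⟪∇ H (γ t), v⟫ t :=
    hH.hasGradientAt.hasFDerivAt.comp_hasDerivAt t hγ
  have hlin : HasDerivAt (fun τ => ⟪γ τ - xbar, ∇ H xbar⟫) ⟪v, ∇ H xbar⟫ t := by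
    simpa using (hγ.sub_const xbar).inner ℝ (hasDerivAt_const t (∇ H xbar))
  rw [inner_sub_left, ← real_inner_comm (∇ H xbar) v]
  exact (hHγ.sub hlin).sub_const (H xbar)

end ShiftedHamiltonian

theorem shifted_passivity_general (n : ℕ)
    (J R : Matrix (Fin n) (Fin n) ℝ) (hJ : Jᵀ = -J)
    (H : EuclideanSpace ℝ (Fin n) → ℝ) (hH : Differentiable ℝ H)
    (I : Set (Fin n)) [DecidablePred (· ∈ I)]
    (u ubar : Fin n → ℝ)
    (xbar : EuclideanSpace ℝ (Fin n)) (hxbar : ∀ i ∉ I, 0 < gradient H xbar i)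
    (G : EuclideanSpace ℝ (Fin n) → Matrix (Fin n) (Fin n) ℝ)
    (hG : ∀ x, G x = Matrix.diagonal (fun i => if i ∈ I then 0 else (gradient H x i)⁻¹))
    (hss : (J - R) *ᵥ (fun j => gradient H xbar j) + G xbar *ᵥ ubar = 0)
    (Z : EuclideanSpace ℝ (Fin n) → Matrix (Fin n) (Fin n) ℝ)
    (hZ : ∀ x, Z x = G xbar * Matrix.diagonal ubar * G x)
    (γ : ℝ → EuclideanSpace ℝ (Fin n)) (t : ℝ)
    (hγ : HasDerivAt γ
      (WithLp.toLp 2 (fun i => ((J - R) *ᵥ (fun j => gradient H (γ t) j) + G (γ t) *ᵥ u) i)) t)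
    (hΩ : ∀ i ∉ I, 0 < gradient H (γ t) i) :
    let S : EuclideanSpace ℝ (Fin n) → ℝ :=
      fun x => H x - (inner ℝ (x - xbar) (gradient H xbar) : ℝ) - H xbar
    let s : Fin n → ℝ := fun j => gradient H (γ t) j - gradient H xbar j
    let y : Fin n → ℝ := (G (γ t))ᵀ *ᵥ s
    HasDerivAt (fun τ => S (γ τ)) (-(s ⬝ᵥ ((R + Z (γ t)) *ᵥ s)) + y ⬝ᵥ (u - ubar)) t ∧
      ((R + Z (γ t)).PosSemidef →
        -(s ⬝ᵥ ((R + Z (γ t)) *ᵥ s)) + y ⬝ᵥ (u - ubar) ≤ (y - 0) ⬝ᵥ (u - ubar)) := by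
  intro S s y
  have hZs : G xbar *ᵥ ubar - G (γ t) *ᵥ ubar = Z (γ t) *ᵥ s := by
    rw [hZ, hG, hG]
    exact diagonal_mulVec_sub_diagonal_mulVec
      (fun i => ite_inv_sub_ite_inv fun hi => ⟨(hΩ i hi).ne', (hxbar i hi).ne'⟩) ubar
  have hshift : (J - R) *ᵥ (fun j => gradient H (γ t) j) + G (γ t) *ᵥ u =
      (J - (R + Z (γ t))) *ᵥ s + G (γ t) *ᵥ (u - ubar) :=
    shifted_model_s5 hss hZs
  refine ⟨?_, fun hM => ?_⟩
  · refine (hasDerivAt_shiftedHamiltonian_comp xbar (hH _) hγ).congr_deriv ?_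
    rw [EuclideanSpace.inner_eq_star_dotProduct, star_trivial, dotProduct_comm]
    change s ⬝ᵥ ((J - R) *ᵥ (fun j => gradient H (γ t) j) + G (γ t) *ᵥ u) = _
    rw [hshift, dotProduct_shifted_model hJ]
  · simpa using hM.dotProduct_mulVec_nonneg s

/-- Shifted passivity.  Along trajectories of `ẋ = (J−R)∇H(x) + G(x)u` with output
`y = G(x)ᵀ∇S(x)`, the shifted Hamiltonian `S(x) = H(x) − ⟨x−x̄, ∇H(x̄)⟩ − H(x̄)` satisfies
`dS/dt = −∇S(x)ᵀ(R+Z(x))∇S(x) + yᵀ(u−ū)`; hence if `R + Z(x) ⪰ 0` then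
`dS/dt ≤ (y − ȳ)ᵀ(u − ū)` with `ȳ = 0`. -/
theorem shifted_passivity (n : ℕ)
    (J R : Matrix (Fin n) (Fin n) ℝ) (hJ : Jᵀ = -J) (hR : R.PosSemidef)
    (H : EuclideanSpace ℝ (Fin n) → ℝ) (hH : Differentiable ℝ H)
    (I : Set (Fin n)) [DecidablePred (· ∈ I)]
    (u ubar : Fin n → ℝ) (hu : ∀ i ∈ I, u i = 0 ∧ ubar i = 0)
    (xbar : EuclideanSpace ℝ (Fin n)) (hxbar : ∀ i ∉ I, 0 < gradient H xbar i)
    (G : EuclideanSpace ℝ (Fin n) → Matrix (Fin n) (Fin n) ℝ)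
    (hG : ∀ x, G x = Matrix.diagonal (fun i => if i ∈ I then 0 else (gradient H x i)⁻¹))
    (hss : (J - R) *ᵥ (fun j => gradient H xbar j) + G xbar *ᵥ ubar = 0)
    (Z : EuclideanSpace ℝ (Fin n) → Matrix (Fin n) (Fin n) ℝ)
    (hZ : ∀ x, Z x = G xbar * Matrix.diagonal ubar * G x)
    (γ : ℝ → EuclideanSpace ℝ (Fin n)) (t : ℝ)
    (hγ : HasDerivAt γ
      (WithLp.toLp 2 (fun i => ((J - R) *ᵥ (fun j => gradient H (γ t) j) + G (γ t) *ᵥ u) i)) t)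
    (hΩ : ∀ i ∉ I, 0 < gradient H (γ t) i) :
    let S : EuclideanSpace ℝ (Fin n) → ℝ :=
      fun x => H x - (inner ℝ (x - xbar) (gradient H xbar) : ℝ) - H xbar
    let s : Fin n → ℝ := fun j => gradient H (γ t) j - gradient H xbar j
    let y : Fin n → ℝ := (G (γ t))ᵀ *ᵥ s
    HasDerivAt (fun τ => S (γ τ)) (-(s ⬝ᵥ ((R + Z (γ t)) *ᵥ s)) + y ⬝ᵥ (u - ubar)) t ∧
      ((R + Z (γ t)).PosSemidef →
        -(s ⬝ᵥ ((R + Z (γ t)) *ᵥ s)) + y ⬝ᵥ (u - ubar) ≤ (y - 0) ⬝ᵥ (u - ubar)) :=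
  shifted_passivity_general n J R hJ H hH I u ubar xbar hxbar G hG hss Z hZ γ t hγ hΩ
end

section
/- If R is positive definite, then every x ∈ Ω⁺ satisfying diag(∇H(x)) > −G(x̄)diag(ū)/λ_min(R) (entrywise, i.e., (∇H(x))_i > −Ḡ_{ii}ū_i/λ_min(R) for all i ∉ I) satisfies R + Z(x) > 0, where Z(x) = G(x̄)diag(ū)G(x). -/
/-!
Let `μ = λ_min(R) > 0`. By the spectral theorem `R - μ • 1` is positive semidefinite, and
`Z(x)` is diagonal with entries `Ḡᵢᵢ ūᵢ / (∇H(x))ᵢ` (zero for `i ∈ I`), which the hypothesis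
bounds below by `-μ`. Hence `μ • 1 + Z(x)` is positive definite, and so is
`R + Z(x) = (R - μ • 1) + (μ • 1 + Z(x))`.
-/

open Matrix

namespace Matrix

open scoped ComplexOrder

variable {ι 𝕜 : Type*} [Fintype ι] [DecidableEq ι] [RCLike 𝕜] {A : Matrix ι ι 𝕜}

theorem IsHermitian.posSemidef_sub_smul_one (hA : A.IsHermitian) {c : ℝ}
    (hc : ∀ i, c ≤ hA.eigenvalues i) : (A - (c : 𝕜) • 1).PosSemidef := by
  have hshift : A - (c : 𝕜) • 1 = Unitary.conjStarAlgAut 𝕜 _ hA.eigenvectorUnitary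
      (diagonal fun i => ((hA.eigenvalues i - c : ℝ) : 𝕜)) := by
    conv_lhs => rw [hA.spectral_theorem, ← map_one (Unitary.conjStarAlgAut 𝕜 _ _), ← map_smul,
      ← map_sub, smul_one_eq_diagonal, diagonal_sub]
    simp [RCLike.algebraMap_eq_ofReal]
  rw [hshift, Unitary.conjStarAlgAut_apply]
  exact (posSemidef_diagonal_iff.2 fun i => by simpa using hc i).mul_mul_conjTranspose_same _

theorem IsHermitian.posDef_add_diagonal (hA : A.IsHermitian) {c : ℝ}
    (hc : ∀ i, c ≤ hA.eigenvalues i) {d : ι → ℝ} (hd : ∀ i, -c < d i) :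
    (A + diagonal fun i => (d i : 𝕜)).PosDef := by
  have hsplit : A + diagonal (fun i => (d i : 𝕜)) =
      (A - (c : 𝕜) • 1) + diagonal fun i => ((c + d i : ℝ) : 𝕜) := by
    simp only [RCLike.ofReal_add, ← diagonal_add, smul_one_eq_diagonal]
    abel
  rw [hsplit]
  exact PosDef.posSemidef_add (hA.posSemidef_sub_smul_one hc)
    (posDef_diagonal_iff.2 fun i => RCLike.ofReal_pos.2 (by linarith [hd i]))

theorem IsHermitian.iInf_eigenvalues_le (hA : A.IsHermitian) (j : ι) :
    ⨅ i, hA.eigenvalues i ≤ hA.eigenvalues j :=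
  ciInf_le (Finite.bddBelow_range _) j

theorem PosDef.iInf_eigenvalues_pos [Nonempty ι] (hA : A.PosDef) :
    0 < ⨅ i, hA.1.eigenvalues i := by
  obtain ⟨j, hj⟩ := Finite.exists_min hA.1.eigenvalues
  exact (hA.eigenvalues_pos j).trans_le (le_ciInf hj)

end Matrix

theorem neg_lt_mul_inv_of_neg_div_lt {a b μ : ℝ} (hμ : 0 < μ) (hb : 0 < b) (h : -a / μ < b) :
    -μ < a * b⁻¹ := by
  rw [div_lt_iff₀ hμ] at h
  rw [← div_eq_mul_inv, lt_div_iff₀ hb]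
  linarith [mul_comm b μ]

theorem lower_bounds_gradH_posDef_general (n : ℕ) (hn : 0 < n)
    (R : Matrix (Fin n) (Fin n) ℝ) (hR : R.PosDef)
    (gradH : (Fin n → ℝ) → (Fin n → ℝ))
    (I : Set (Fin n)) [DecidablePred (· ∈ I)]
    (ubar : Fin n → ℝ)
    (xbar : Fin n → ℝ)
    (G : (Fin n → ℝ) → Matrix (Fin n) (Fin n) ℝ)
    (hG : ∀ x, G x = Matrix.diagonal (fun i => if i ∈ I then 0 else (gradH x i)⁻¹)) :
    ∀ x : Fin n → ℝ, (∀ i ∉ I, 0 < gradH x i) →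
      (∀ i ∉ I, -(G xbar i i * ubar i) / (⨅ j, hR.1.eigenvalues j) < gradH x i) →
      (R + G xbar * Matrix.diagonal ubar * G x).PosDef := by
  intro x hx hbound
  have : Nonempty (Fin n) := ⟨⟨0, hn⟩⟩
  have hμ := hR.iInf_eigenvalues_pos
  have hZ : G xbar * diagonal ubar * G x = diagonal fun i => G xbar i i * ubar i * G x i i := by
    rw [hG xbar, hG x]
    simp only [diagonal_mul_diagonal, diagonal_apply_eq]
  rw [hZ]
  refine hR.1.posDef_add_diagonal (d := fun i => G xbar i i * ubar i * G x i i)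
    hR.1.iInf_eigenvalues_le fun i => ?_
  by_cases hi : i ∈ I
  · simpa [hG x, hi] using hμ
  · simpa [hG x, hi] using neg_lt_mul_inv_of_neg_div_lt hμ (hx i hi) (hbound i hi)

/-- If the dissipation matrix `R` is positive definite, then every `x ∈ Ω⁺` with
`(∇H(x))ᵢ > −Ḡᵢᵢ ūᵢ / λ_min(R)` for all `i ∉ I` satisfies `R + Z(x) > 0`, where
`Z(x) = G(x̄) diag(ū) G(x)` and `G(x)` is diagonal with entries `1/(∇H(x))ᵢ` for `i ∉ I`
and `0` for `i ∈ I`. -/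
theorem lower_bounds_gradH_posDef (n : ℕ) (hn : 0 < n)
    (R : Matrix (Fin n) (Fin n) ℝ) (hR : R.PosDef)
    (gradH : (Fin n → ℝ) → (Fin n → ℝ))
    (I : Set (Fin n)) [DecidablePred (· ∈ I)]
    (ubar : Fin n → ℝ) (hubar : ∀ i ∈ I, ubar i = 0)
    (xbar : Fin n → ℝ) (hxbar : ∀ i ∉ I, 0 < gradH xbar i)
    (G : (Fin n → ℝ) → Matrix (Fin n) (Fin n) ℝ)
    (hG : ∀ x, G x = Matrix.diagonal (fun i => if i ∈ I then 0 else (gradH x i)⁻¹)) :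
    ∀ x : Fin n → ℝ, (∀ i ∉ I, 0 < gradH x i) →
      (∀ i ∉ I, -(G xbar i i * ubar i) / (⨅ j, hR.1.eigenvalues j) < gradH x i) →
      (R + G xbar * Matrix.diagonal ubar * G x).PosDef :=
  lower_bounds_gradH_posDef_general n hn R hR gradH I ubar xbar G hG
end

section
/- For the single-port DC circuit with CPL, the matrix R + Z evaluated at the equilibrium (φ̄_s, q̄_s) — namely diag(r_ℓ, 1/r_p − C²P/(q̄_s²)) — is positive definite if and only if P < r_p v_g²/(r_p + 2r_ℓ)². -/
/-!
At the equilibrium the capacitor voltage `v = q̄ₛ / C` is the larger root of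
`(r_ℓ + r_p) v² − r_p v_g v + r_ℓ r_p P`, and the second diagonal entry is positive iff
`r_p P < v²`. Using the quadratic, this is `t < v` for `t = (2 r_ℓ + r_p) P / v_g`, and a point
lies below the larger root of an upward parabola iff it lies left of the vertex or the parabola
is negative there. At `t` the parabola equals `(r_ℓ + r_p)(t² − r_p P)`, whose sign is that of
`(r_p + 2 r_ℓ)² P − r_p v_g²`.
-/

open Matrix

theorem lt_larger_root_iff {K : Type*} [Field K] [LinearOrder K] [IsStrictOrderedRing K]
    {a b c v t : K} (ha : 0 < a) (hv : a * v ^ 2 - b * v + c = 0) (hvb : b ≤ 2 * a * v) :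
    t < v ↔ 2 * a * t < b ∨ a * t ^ 2 - b * t + c < 0 := by
  have hfactor : a * t ^ 2 - b * t + c = (t - v) * (a * (t + v) - b) := by
    linear_combination hv
  rw [hfactor]
  constructor
  · intro htv
    rcases lt_or_ge (2 * a * t) b with hleft | hright
    · exact Or.inl hleft
    · exact Or.inr (mul_neg_of_neg_of_pos (by linarith) (by nlinarith))
  · rintro (hleft | hneg)
    · nlinarith
    · by_contra! hvt
      nlinarith [mul_nonneg (sub_nonneg.mpr hvt) (show 0 ≤ a * (t + v) - b by nlinarith)]

section SinglePort

variable {rl rp vg P : ℝ}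

/-- The capacitor voltage `q̄ₛ / C` at the stable equilibrium. -/
noncomputable def equilibriumVoltage (rl rp vg P : ℝ) : ℝ :=
  rp * (vg + √(vg ^ 2 - 4 * rl * (rl + rp) * P / rp)) / (2 * (rl + rp))

theorem equilibriumVoltage_pos (hrl : 0 ≤ rl) (hrp : 0 < rp) (hvg : 0 < vg) :
    0 < equilibriumVoltage rl rp vg P := by
  unfold equilibriumVoltage
  positivity

theorem mul_le_two_mul_equilibriumVoltage (hrl : 0 ≤ rl) (hrp : 0 < rp) :
    rp * vg ≤ 2 * (rl + rp) * equilibriumVoltage rl rp vg P := by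
  unfold equilibriumVoltage
  rw [mul_div_cancel₀ _ (by positivity)]
  nlinarith [Real.sqrt_nonneg (vg ^ 2 - 4 * rl * (rl + rp) * P / rp)]

theorem equilibriumVoltage_isRoot (hrl : 0 ≤ rl) (hrp : 0 < rp)
    (hΔ : 0 ≤ vg ^ 2 - 4 * rl * (rl + rp) * P / rp) :
    (rl + rp) * equilibriumVoltage rl rp vg P ^ 2 - rp * vg * equilibriumVoltage rl rp vg P
      + rl * rp * P = 0 := by
  have hs := Real.sq_sqrt hΔ
  unfold equilibriumVoltage
  generalize √(vg ^ 2 - 4 * rl * (rl + rp) * P / rp) = s at hs ⊢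
  have hs' : rp * s ^ 2 = rp * vg ^ 2 - 4 * rl * (rl + rp) * P := by
    rw [hs]; field_simp
  field_simp
  linear_combination rp * hs'

theorem mul_lt_equilibriumVoltage_sq_iff (hrl : 0 < rl) (hrp : 0 < rp) (hvg : 0 < vg)
    (hP : 0 < P) (hΔ : 0 ≤ vg ^ 2 - 4 * rl * (rl + rp) * P / rp) :
    rp * P < equilibriumVoltage rl rp vg P ^ 2 ↔ P < rp * vg ^ 2 / (rp + 2 * rl) ^ 2 := by
  have hroot := equilibriumVoltage_isRoot hrl.le hrp hΔ
  have hvertex := mul_le_two_mul_equilibriumVoltage (P := P) (vg := vg) hrl.le hrp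
  set v := equilibriumVoltage rl rp vg P
  set t := (2 * rl + rp) * P / vg with ht
  have hvt : vg * t = (2 * rl + rp) * P := by rw [ht]; field_simp
  have hquad : (rl + rp) * (v ^ 2 - rp * P) = rp * (vg * v - (2 * rl + rp) * P) := by
    linear_combination hroot
  have hf : vg ^ 2 * ((rl + rp) * t ^ 2 - rp * vg * t + rl * rp * P)
      = (rl + rp) * P * ((rp + 2 * rl) ^ 2 * P - rp * vg ^ 2) := by
    linear_combination ((rl + rp) * (vg * t + (2 * rl + rp) * P) - rp * vg ^ 2) * hvt
  have hc : 0 < (rl + rp) * P := by positivity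
  calc rp * P < v ^ 2 ↔ t < v := by
        rw [← sub_pos, ← mul_pos_iff_of_pos_left (by positivity : 0 < rl + rp), hquad,
          mul_pos_iff_of_pos_left hrp, sub_pos, div_lt_iff₀ hvg, mul_comm v]
    _ ↔ 2 * (rl + rp) * t < rp * vg ∨ (rl + rp) * t ^ 2 - rp * vg * t + rl * rp * P < 0 :=
        lt_larger_root_iff (by positivity) hroot hvertex
    _ ↔ (rp + 2 * rl) ^ 2 * P < rp * vg ^ 2 := by
        constructor
        · rintro (hleft | hneg)
          · have hgap : 0 < (2 * rl + rp) * P * rp := by positivity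
            nlinarith [mul_lt_mul_of_pos_left hleft hvg]
          · by_contra! hge
            nlinarith [mul_neg_of_pos_of_neg (pow_pos hvg 2) hneg,
              mul_nonneg hc.le (sub_nonneg.mpr hge)]
        · intro h
          right
          nlinarith [mul_neg_of_pos_of_neg hc (sub_neg.mpr h), pow_pos hvg 2]
    _ ↔ P < rp * vg ^ 2 / (rp + 2 * rl) ^ 2 := by
        rw [lt_div_iff₀ (by positivity), mul_comm]

end SinglePort

theorem singlePort_RplusZ_posDef_iff_general
    (C rl rp vg P : ℝ)
    (hC : 0 < C) (hrl : 0 < rl) (hrp : 0 < rp) (hvg : 0 < vg) (hP : 0 < P)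
    (hΔ : 0 ≤ vg ^ 2 - 4 * rl * (rl + rp) * P / rp) :
    (Matrix.diagonal
        ![rl, 1 / rp - C ^ 2 * P /
            (C * rp * (vg + Real.sqrt (vg ^ 2 - 4 * rl * (rl + rp) * P / rp)) /
              (2 * (rl + rp))) ^ 2]).PosDef
      ↔ P < rp * vg ^ 2 / (rp + 2 * rl) ^ 2 := by
  have hv := equilibriumVoltage_pos (P := P) hrl.le hrp hvg
  have hq : C * rp * (vg + Real.sqrt (vg ^ 2 - 4 * rl * (rl + rp) * P / rp)) / (2 * (rl + rp))
      = C * equilibriumVoltage rl rp vg P := by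
    rw [equilibriumVoltage, mul_assoc, mul_div_assoc]
  rw [posDef_diagonal_iff, Fin.forall_fin_two]
  simp only [cons_val_zero, cons_val_one, cons_val_fin_one, hrl, true_and]
  rw [hq, mul_pow, mul_div_mul_left _ _ (pow_ne_zero 2 hC.ne'), sub_pos,
    div_lt_div_iff₀ (by positivity) hrp, one_mul, mul_comm]
  exact mul_lt_equilibriumVoltage_sq_iff hrl hrp hvg hP hΔ

/-- For the single-port DC circuit with a constant power load, the matrix `R + Z`
evaluated at the stable equilibrium `(φ̄ₛ, q̄ₛ)`, namely
`diag(r_ℓ, 1/r_p − C²P/q̄ₛ²)`, is positive definite iff `P < r_p v_g²/(r_p + 2 r_ℓ)²`. -/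
theorem singlePort_RplusZ_posDef_iff
    (L C rl rp vg P : ℝ)
    (hL : 0 < L) (hC : 0 < C) (hrl : 0 < rl) (hrp : 0 < rp) (hvg : 0 < vg) (hP : 0 < P)
    (hΔ : 0 ≤ vg ^ 2 - 4 * rl * (rl + rp) * P / rp) :
    (Matrix.diagonal
        ![rl, 1 / rp - C ^ 2 * P /
            (C * rp * (vg + Real.sqrt (vg ^ 2 - 4 * rl * (rl + rp) * P / rp)) /
              (2 * (rl + rp))) ^ 2]).PosDef
      ↔ P < rp * vg ^ 2 / (rp + 2 * rl) ^ 2 :=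
  singlePort_RplusZ_posDef_iff_general C rl rp vg P hC hrl hrp hvg hP hΔ
end

section
/- For the synchronous generator model with P_e < (D_d ω* + τ_m)²/(4(D_d+D_m)), the set Ω_p = {ω > ω̄_u} is forward invariant under the dynamics M ω̇ = −(D_m+D_d)ω − P_e/ω + τ_m + D_d ω*, and every solution starting in Ω_p converges to ω̄_s; in particular the function V(ω) = ½M(ω − ω̄_s)² is strictly decreasing along nonequilibrium solutions in Ω_p. -/
/-!
Away from `ω = 0` the field satisfies `M ω f(ω) = -(D_d + D_m)(ω - ω̄ₛ)(ω - ω̄ᵤ)`, so `f > 0` on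
`(ω̄ᵤ, ω̄ₛ)` and `f < 0` on `(ω̄ₛ, ∞)`. A solution starting above `ω̄ᵤ` can therefore never fall
below a level `c ∈ (ω̄ᵤ, min(ω(0), ω̄ₛ))`, since `f(c) > 0` pushes it back up. On `[c, ∞)` the
Lyapunov function `(ω - ω̄ₛ)²` has derivative `2(ω - ω̄ₛ) f(ω) < 0` off `ω̄ₛ`; by compactness this
derivative is bounded away from `0` while the solution stays `ε`-far from `ω̄ₛ`, which forces
convergence.
-/

open Set Filter Topology Metric

theorem le_apply_of_hasDerivAt_of_pos {ω F : ℝ → ℝ} {c : ℝ}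
    (hω : ∀ t, 0 ≤ t → HasDerivAt ω (F (ω t)) t) (h₀ : c ≤ ω 0) (hc : 0 < F c) :
    ∀ t, 0 ≤ t → c ≤ ω t := by
  intro t ht
  have key := image_le_of_deriv_right_lt_deriv_boundary (f := fun s => -ω s) (a := 0) (b := t)
    (f' := fun s => -F (ω s)) (B := fun _ => -c) (B' := fun _ => 0)
    (fun s hs => (hω s hs.1).continuousAt.neg.continuousWithinAt)
    (fun s hs => (hω s hs.1).neg.hasDerivWithinAt) (neg_le_neg h₀)
    (fun _ => hasDerivAt_const _ _)
    (fun s _ hs => by simpa [neg_inj.1 hs] using hc) ⟨ht, le_rfl⟩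
  exact neg_le_neg_iff.1 key

section Lyapunov

variable {ω F : ℝ → ℝ} {S : Set ℝ} {a : ℝ}

theorem hasDerivAt_sq_sub {t : ℝ} (hω : HasDerivAt ω (F (ω t)) t) :
    HasDerivAt (fun s => (ω s - a) ^ 2) (2 * (ω t - a) * F (ω t)) t := by
  simpa using (hω.sub_const a).fun_pow 2

variable (hω : ∀ t, 0 ≤ t → HasDerivAt ω (F (ω t)) t) (hωS : ∀ t, 0 ≤ t → ω t ∈ S)
  (hsign : ∀ w ∈ S, w ≠ a → (w - a) * F w < 0)
include hω hωS hsign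

theorem antitoneOn_sq_sub : AntitoneOn (fun t => (ω t - a) ^ 2) (Ici 0) := by
  refine antitoneOn_of_hasDerivWithinAt_nonpos (convex_Ici 0)
    (fun t ht => (hasDerivAt_sq_sub (hω t ht)).continuousAt.continuousWithinAt)
    (fun t ht => (hasDerivAt_sq_sub (hω t (interior_subset ht))).hasDerivWithinAt) ?_
  intro t ht
  have ht : 0 ≤ t := interior_subset ht
  rcases eq_or_ne (ω t) a with h | h
  · simp [h]
  · nlinarith [hsign _ (hωS t ht) h]

theorem antitoneOn_dist : AntitoneOn (fun t => dist (ω t) a) (Ici 0) := fun s hs t ht hst => by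
  simpa [Real.dist_eq, sq_le_sq] using antitoneOn_sq_sub hω hωS hsign hs ht hst

theorem exists_dist_lt_of_sub_mul_neg (hS : IsClosed S) (hF : ContinuousOn F S) {ε : ℝ}
    (hε : 0 < ε) : ∃ T, 0 ≤ T ∧ dist (ω T) a < ε := by
  by_contra! hfar
  set K := S ∩ (closedBall a (dist (ω 0) a) \ ball a ε)
  have hK : IsCompact K :=
    ((isCompact_closedBall a _).diff isOpen_ball).inter_left hS
  have hωK : ∀ t, 0 ≤ t → ω t ∈ K := fun t ht =>
    ⟨hωS t ht, mem_closedBall.2 (antitoneOn_dist hω hωS hsign self_mem_Ici ht ht),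
      fun h => (hfar t ht).not_gt (mem_ball.1 h)⟩
  have hcont : ContinuousOn (fun w => -(2 * (w - a) * F w)) K := by
    have := hF.mono (inter_subset_left : K ⊆ S)
    fun_prop
  obtain ⟨δ, hδ, hδK⟩ := hK.exists_forall_le' hcont (a := 0) fun w hw => by
    have hwa : w ≠ a := fun h => hw.2.2 (h ▸ mem_ball_self hε)
    nlinarith [hsign w hw.1 hwa]
  -- `(ω t - a)²` decreases at rate at least `δ`, hence would eventually become negative
  have hdecay : ∀ t, 0 ≤ t → (ω t - a) ^ 2 ≤ (ω 0 - a) ^ 2 - δ * t := fun t ht => by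
    have := (convex_Ici 0).image_sub_le_mul_sub_of_deriv_le
      (f := fun s => (ω s - a) ^ 2) (C := -δ)
      (fun s hs => (hasDerivAt_sq_sub (hω s hs)).continuousAt.continuousWithinAt)
      (fun s hs =>
        (hasDerivAt_sq_sub (hω s (interior_subset hs))).differentiableAt.differentiableWithinAt)
      (fun s hs => by
        rw [(hasDerivAt_sq_sub (hω s (interior_subset hs))).deriv]
        linarith [hδK _ (hωK s (interior_subset hs))])
      0 self_mem_Ici t ht ht
    linarith
  have hT : 0 ≤ (ω 0 - a) ^ 2 / δ + 1 := by positivity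
  have := hdecay _ hT
  rw [mul_add, mul_div_cancel₀ _ hδ.ne'] at this
  nlinarith [sq_nonneg (ω ((ω 0 - a) ^ 2 / δ + 1) - a)]

theorem tendsto_of_sub_mul_neg (hS : IsClosed S) (hF : ContinuousOn F S) :
    Tendsto ω atTop (𝓝 a) := by
  refine Metric.tendsto_atTop.2 fun ε hε => ?_
  obtain ⟨T, hT, hTε⟩ := exists_dist_lt_of_sub_mul_neg hω hωS hsign hS hF hε
  exact ⟨T, fun t ht => (antitoneOn_dist hω hωS hsign hT (hT.trans ht) ht).trans_lt hTε⟩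

end Lyapunov

section Quadratic

variable {A B P : ℝ}

noncomputable def largerRoot (A B P : ℝ) : ℝ := (B + √(B ^ 2 - 4 * A * P)) / (2 * A)

noncomputable def smallerRoot (A B P : ℝ) : ℝ := (B - √(B ^ 2 - 4 * A * P)) / (2 * A)

theorem quadratic_eq_mul_sub_largerRoot_mul_sub_smallerRoot (hA : A ≠ 0)
    (hdisc : 4 * A * P ≤ B ^ 2) (w : ℝ) :
    A * w ^ 2 - B * w + P = A * ((w - largerRoot A B P) * (w - smallerRoot A B P)) := by
  have hs := Real.sq_sqrt (sub_nonneg.2 hdisc)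
  unfold largerRoot smallerRoot
  set s := √(B ^ 2 - 4 * A * P)
  field_simp
  linear_combination hs

theorem smallerRoot_pos (hA : 0 < A) (hB : 0 < B) (hP : 0 < P) : 0 < smallerRoot A B P := by
  refine div_pos (sub_pos.2 ((Real.sqrt_lt' hB).2 ?_)) (by positivity)
  nlinarith

theorem smallerRoot_lt_largerRoot (hA : 0 < A) (hdisc : 4 * A * P < B ^ 2) :
    smallerRoot A B P < largerRoot A B P := by
  have : 0 < √(B ^ 2 - 4 * A * P) := Real.sqrt_pos.2 (by linarith)
  unfold largerRoot smallerRoot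
  gcongr
  linarith

end Quadratic

section SwingEquation

variable {M Dm Dd τm ωst Pe : ℝ}

noncomputable def swingField (M Dm Dd τm ωst Pe : ℝ) (w : ℝ) : ℝ :=
  (-(Dm + Dd) * w - Pe / w + τm + Dd * ωst) / M

theorem continuousOn_swingField : ContinuousOn (swingField M Dm Dd τm ωst Pe) (Ioi 0) := by
  have hPe : ContinuousOn (fun w => Pe / w) (Ioi 0) :=
    continuousOn_const.div continuousOn_id fun w hw => (mem_Ioi.1 hw).ne'
  unfold swingField
  fun_prop

theorem mul_mul_swingField (hM : M ≠ 0) {w : ℝ} (hw : w ≠ 0) :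
    M * w * swingField M Dm Dd τm ωst Pe w = -((Dd + Dm) * w ^ 2 - (Dd * ωst + τm) * w + Pe) := by
  unfold swingField
  field_simp
  ring

theorem sub_largerRoot_mul_swingField_neg (hM : 0 < M) (hA : 0 < Dd + Dm)
    (hB : 0 < Dd * ωst + τm) (hPe : 0 < Pe) (hdisc : 4 * (Dd + Dm) * Pe ≤ (Dd * ωst + τm) ^ 2)
    {w : ℝ} (hw : smallerRoot (Dd + Dm) (Dd * ωst + τm) Pe < w)
    (hws : w ≠ largerRoot (Dd + Dm) (Dd * ωst + τm) Pe) :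
    (w - largerRoot (Dd + Dm) (Dd * ωst + τm) Pe) * swingField M Dm Dd τm ωst Pe w < 0 := by
  set ωs := largerRoot (Dd + Dm) (Dd * ωst + τm) Pe
  set ωu := smallerRoot (Dd + Dm) (Dd * ωst + τm) Pe
  have hw₀ : 0 < w := (smallerRoot_pos hA hB hPe).trans hw
  have key : M * w * ((w - ωs) * swingField M Dm Dd τm ωst Pe w)
      = -((Dd + Dm) * (w - ωs) ^ 2 * (w - ωu)) := by
    rw [mul_left_comm, mul_mul_swingField hM.ne' hw₀.ne',
      quadratic_eq_mul_sub_largerRoot_mul_sub_smallerRoot hA.ne' hdisc]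
    ring
  have hneg : M * w * ((w - ωs) * swingField M Dm Dd τm ωst Pe w) < 0 := by
    rw [key, neg_lt_zero]
    have := sub_ne_zero.2 hws
    have := sub_pos.2 hw
    positivity
  exact neg_of_mul_neg_right hneg (by positivity)

end SwingEquation

/-- For the improved swing equation `M ω̇ = −(D_m+D_d)ω − P_e/ω + τ_m + D_d ω*` with
`P_e < (D_d ω* + τ_m)²/(4(D_d+D_m))`, the set `Ω_p = {ω > ω̄ᵤ}` is forward invariant and
every solution starting in it converges to `ω̄ₛ`; moreover the shifted Hamiltonian
`V(ω) = ½M(ω − ω̄ₛ)²` is strictly decreasing along nonequilibrium solutions in `Ω_p`,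
i.e. its derivative along the vector field is negative there. -/
theorem swing_equation_ROA
    (M Dm Dd τm ωst Pe : ℝ)
    (hM : 0 < M) (hDm : 0 < Dm) (hDd : 0 < Dd) (hτ : 0 < τm) (hω : 0 < ωst) (hPe : 0 < Pe)
    (hP : Pe < (Dd * ωst + τm) ^ 2 / (4 * (Dd + Dm))) :
    let Δ := (Dd * ωst + τm) ^ 2 - 4 * (Dd + Dm) * Pe
    let ωs := (Dd * ωst + τm + Real.sqrt Δ) / (2 * (Dd + Dm))
    let ωu := (Dd * ωst + τm - Real.sqrt Δ) / (2 * (Dd + Dm))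
    let f : ℝ → ℝ := fun w => (-(Dm + Dd) * w - Pe / w + τm + Dd * ωst) / M
    (∀ ω : ℝ → ℝ,
        (∀ t : ℝ, 0 ≤ t → HasDerivAt ω (f (ω t)) t) → ωu < ω 0 →
          (∀ t : ℝ, 0 ≤ t → ωu < ω t) ∧
            Filter.Tendsto ω Filter.atTop (nhds ωs)) ∧
      (∀ w : ℝ, ωu < w → w ≠ ωs → M * (w - ωs) * f w < 0) := by
  intro Δ ωs ωu f
  have hA : 0 < Dd + Dm := by positivity
  have hB : 0 < Dd * ωst + τm := by positivity
  have hdisc : 4 * (Dd + Dm) * Pe < (Dd * ωst + τm) ^ 2 := by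
    rwa [lt_div_iff₀ (by positivity), mul_comm] at hP
  have hωu : 0 < ωu := smallerRoot_pos hA hB hPe
  have hωuωs : ωu < ωs := smallerRoot_lt_largerRoot hA hdisc
  have hsign : ∀ w, ωu < w → w ≠ ωs → (w - ωs) * f w < 0 := fun w hw hws =>
    sub_largerRoot_mul_swingField_neg hM hA hB hPe hdisc.le hw hws
  refine ⟨fun ω hsol hω₀ => ?_, fun w hw hws => by
    simpa only [mul_assoc] using mul_neg_of_pos_of_neg hM (hsign w hw hws)⟩
  set c := min (ω 0) ((ωu + ωs) / 2)
  have hc : ωu < c := lt_min hω₀ (by linarith)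
  have hcωs : c < ωs := (min_le_right _ _).trans_lt (by linarith)
  have hinv : ∀ t, 0 ≤ t → c ≤ ω t :=
    le_apply_of_hasDerivAt_of_pos hsol (min_le_left _ _)
      (pos_of_mul_neg_right (hsign c hc hcωs.ne) (by linarith))
  refine ⟨fun t ht => hc.trans_le (hinv t ht), ?_⟩
  exact tendsto_of_sub_mul_neg (S := Ici c) hsol hinv (fun w hw => hsign w (hc.trans_le hw))
    isClosed_Ici (continuousOn_swingField.mono fun w hw => hωu.trans (hc.trans_le hw))
end

section
/- For the single-port CPL circuit, the minimal capacitor charge threshold q_min := P r_p C²/q̄_s satisfies q_min/q̄_s = P C² r_p/q̄_s², and the condition P < P^s_max = r_p v_g²/(r_p+2r_ℓ)² implies q_min < q̄_s. -/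
/-- For the single-port CPL circuit with `q̄ₛ = C r_p (v_g + √Δ)/(2(r_ℓ+r_p))` and
`q_min = P r_p C² / q̄ₛ`, one has `q_min / q̄ₛ = P C² r_p / q̄ₛ²`, and the stability
condition `P < P^s_max = r_p v_g²/(r_p + 2 r_ℓ)²` implies `q_min < q̄ₛ`. -/
theorem qmin_lt_qbar
    (L C rl rp vg P : ℝ)
    (hL : 0 < L) (hC : 0 < C) (hrl : 0 < rl) (hrp : 0 < rp) (hvg : 0 < vg) (hP : 0 < P)
    (hΔ : 0 < vg ^ 2 - 4 * rl * (rl + rp) * P / rp) :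
    let Δ := vg ^ 2 - 4 * rl * (rl + rp) * P / rp
    let qs := C * rp * (vg + Real.sqrt Δ) / (2 * (rl + rp))
    let qmin := P * rp * C ^ 2 / qs
    qmin / qs = P * C ^ 2 * rp / qs ^ 2 ∧
      (P < rp * vg ^ 2 / (rp + 2 * rl) ^ 2 → qmin < qs) := by
  intro Δ qs qmin
  have hs0 : 0 ≤ Real.sqrt Δ := Real.sqrt_nonneg _
  have hs2 : Real.sqrt Δ ^ 2 = Δ := Real.sq_sqrt hΔ.le
  -- key identity: s² * rp = rp vg² − 4 rl (rl+rp) P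
  have hid : Real.sqrt Δ ^ 2 * rp = rp * vg ^ 2 - 4 * rl * (rl + rp) * P := by
    rw [hs2, show Δ = vg ^ 2 - 4 * rl * (rl + rp) * P / rp from rfl]
    field_simp
  have hqs : 0 < qs := by
    apply div_pos
    · positivity
    · positivity
  constructor
  · show qmin / qs = P * C ^ 2 * rp / qs ^ 2
    rw [show qmin = P * rp * C ^ 2 / qs from rfl]
    field_simp
  · intro hP'
    show P * rp * C ^ 2 / qs < qs
    rw [div_lt_iff₀ hqs]
    have h1 : P * (rp + 2 * rl) ^ 2 < rp * vg ^ 2 := by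
      rw [lt_div_iff₀ (by positivity)] at hP'
      linarith
    -- s > vg * rp / (rp + 2*rl)
    have hs_lb : vg * rp < Real.sqrt Δ * (rp + 2 * rl) := by
      have h3 : (Real.sqrt Δ * (rp + 2 * rl)) ^ 2 * rp
          = (rp * vg ^ 2 - 4 * rl * (rl + rp) * P) * (rp + 2 * rl) ^ 2 := by
        rw [← hid]; ring
      have h2 := mul_lt_mul_of_pos_left h1 (by positivity : (0:ℝ) < 4 * rl * (rl + rp))
      have hsq : (vg * rp) ^ 2 < (Real.sqrt Δ * (rp + 2 * rl)) ^ 2 := by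
        nlinarith [h3, h2, hrp, mul_pos hvg hrp]
      nlinarith [mul_pos hvg hrp, mul_nonneg hs0 (by positivity : (0:ℝ) ≤ rp + 2 * rl)]
    have hmain : 2 * P * (rl + rp) * (rp + 2 * rl) < rp * vg * (vg + Real.sqrt Δ) := by
      have h4 : rp * vg * vg * (2 * (rl + rp)) < rp * vg * (vg + Real.sqrt Δ) * (rp + 2 * rl) := by
        nlinarith [mul_lt_mul_of_pos_left hs_lb (mul_pos hrp hvg)]
      have h5 := mul_lt_mul_of_pos_right h1 (by positivity : (0:ℝ) < 2 * (rl + rp))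
      nlinarith [h4, h5]
    have hscalar : 4 * P * (rl + rp) ^ 2 < rp * (vg + Real.sqrt Δ) ^ 2 := by
      nlinarith [hid, hmain]
    show P * rp * C ^ 2 < qs * qs
    rw [show qs = C * rp * (vg + Real.sqrt Δ) / (2 * (rl + rp)) from rfl]
    rw [div_mul_div_comm, lt_div_iff₀ (by positivity)]
    nlinarith [mul_lt_mul_of_pos_left hscalar (by positivity : (0:ℝ) < C ^ 2 * rp)]
end

section
/- For the unstable equilibrium (φ̄_u, q̄_u) of the single-port CPL circuit with 0 < P < P^e_max, the Jacobian of the vector field f(φ,q) = (−(r_ℓ/L)φ − q/C + v_g, φ/L − q/(C r_p) − PC/q) evaluated at (φ̄_u, q̄_u) has a positive real eigenvalue (equivalently, its determinant is negative). -/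
open Matrix

/-- At the unstable equilibrium `(φ̄ᵤ, q̄ᵤ)` of the single-port CPL circuit with
`0 < P < P^e_max` (i.e. `Δ > 0`), the Jacobian of the vector field
`f(φ,q) = (−(r_ℓ/L)φ − q/C + v_g, φ/L − q/(C r_p) − P C/q)` has negative determinant,
hence a positive real eigenvalue. -/
theorem unstable_equilibrium_jacobian_det_neg
    (L C rl rp vg P : ℝ)
    (hL : 0 < L) (hC : 0 < C) (hrl : 0 < rl) (hrp : 0 < rp) (hvg : 0 < vg) (hP : 0 < P)
    (hΔ : 0 < vg ^ 2 - 4 * rl * (rl + rp) * P / rp) :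
    let Δ := vg ^ 2 - 4 * rl * (rl + rp) * P / rp
    let qu := C * rp * (vg - Real.sqrt Δ) / (2 * (rl + rp))
    (!![-(rl / L), -(1 / C); 1 / L, -(1 / (C * rp)) + P * C / qu ^ 2]).det < 0 := by
  intro Δ qu
  have hrlp : 0 < rl + rp := by linarith
  set s := Real.sqrt Δ with hs
  have hs0 : 0 < s := Real.sqrt_pos.mpr hΔ
  have hs2 : s ^ 2 = Δ := Real.sq_sqrt hΔ.le
  have hs2' : rp * s ^ 2 = rp * vg ^ 2 - 4 * rl * (rl + rp) * P := by
    have : s ^ 2 = vg ^ 2 - 4 * rl * (rl + rp) * P / rp := hs2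
    field_simp at this ⊢; linarith
  have hsv : s < vg := by
    have h : s ^ 2 < vg ^ 2 := by
      nlinarith [mul_pos (mul_pos (mul_pos (by norm_num : (0:ℝ)<4) hrl) hrlp) hP]
    exact lt_of_pow_lt_pow_left₀ 2 hvg.le h
  have hqu : 0 < qu := by
    have : 0 < vg - s := by linarith
    unfold qu
    positivity
  -- key inequality: qu^2 * (rl + rp) < P * C^2 * rl * rp
  have key : qu ^ 2 * (rl + rp) < P * C ^ 2 * rl * rp := by
    have hq : qu = C * rp * (vg - s) / (2 * (rl + rp)) := rfl
    have hΔdef : Δ = vg ^ 2 - 4 * rl * (rl + rp) * P / rp := rfl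
    have h1 : rp * (vg - s) ^ 2 < rp * ((vg - s) * (vg + s)) := by
      have h : 0 < vg - s := by linarith
      nlinarith [mul_pos (mul_pos hrp h) hs0]
    have h2 : rp * ((vg - s) * (vg + s)) = rp * (vg ^ 2 - Δ) := by
      nlinarith [hs2']
    have h3 : rp * (vg ^ 2 - Δ) = 4 * rl * (rl + rp) * P := by
      nlinarith [hs2']
    have h4 : rp * (vg - s) ^ 2 < 4 * rl * (rl + rp) * P := by
      rw [h2, h3] at h1; exact h1
    rw [hq]
    rw [div_pow, div_mul_eq_mul_div, div_lt_iff₀ (by positivity)]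
    nlinarith [mul_lt_mul_of_pos_left h4 (show (0:ℝ) < C ^ 2 * rp * (rl + rp) by positivity)]
  have hdet : (!![-(rl / L), -(1 / C); 1 / L, -(1 / (C * rp)) + P * C / qu ^ 2]).det
      = -(rl / L) * (-(1 / (C * rp)) + P * C / qu ^ 2) - (-(1 / C)) * (1 / L) := by
    simp [Matrix.det_fin_two_of]
  rw [hdet]
  have hqu2 : 0 < qu ^ 2 := by positivity
  rw [show -(rl / L) * (-(1 / (C * rp)) + P * C / qu ^ 2) - (-(1 / C)) * (1 / L)
      = (qu ^ 2 * (rl + rp) - P * C ^ 2 * rl * rp) / (L * C * rp * qu ^ 2) by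
    field_simp; ring]
  apply div_neg_of_neg_of_pos
  · linarith
  · positivity
end
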